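/- Fix an integer N ≥ 2 and let i denote the imaginary unit. Let R be an associative unital ℂ-algebra containing elements p_1,…,p_N and invertible elements a_1,…,a_N such that all p_m commute with each other, all a_m and a_m^{-1} commute with each other, [p_m, a_k] = −i·δ_{mk}·a_k for all m,k, and elements with distinct indices commute. For u ∈ ℂ let L_m(u) be the 2×2 matrix over R with rows (u·1 − p_m, −a_m) and (a_m^{-1}, 0), let T_N(u) = L_N(u)⋯L_1(u), and let t(u) be the trace of T_N(u). Then t(u) = u^N + t_1·u^{N−1} + t_2·u^{N−2} + (lower order), where t_1 = −(p_1 + ⋯ + p_N) and t_2 = ∑_{1≤m<k≤N} p_m·p_k − ∑_{k=1}^{N−1} a_{k+1}·a_k^{−1} − a_1·a_N^{−1}. -/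

import Mathlib

/-!
Over `R[X]` put `L_m = [[X - p_m, -a_m], [a_m⁻¹, 0]]` and `T_n = L_{n-1} ⋯ L_0`. Since
`T_{n+1} = L_n T_n`, each column of `T_{n+1}` arises from the same column of `T_n` by
`(f, g) ↦ ((X - p_n) f - a_n g, a_n⁻¹ f)`. Induction along this recursion bounds the degree of
entry `(i, j)` by `n - i - j` and tracks the top coefficients: the `(0,0)` entry is
`X^n - (∑ p_m) X^{n-1} + (∑_{m<k} p_m p_k - ∑ a_{k+1} a_k⁻¹) X^{n-2} + ⋯`, the second row feeding
`-a_n a_{n-1}⁻¹` into the `X^{n-2}` coefficient at each step. The `(1,1)` entry of `T_N` is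
`a_{N-1}⁻¹` times the `(0,1)` entry of `T_{N-1}`, whose leading term is `-a_0 X^{N-2}`: this is the
wrap-around term. Evaluating at the central element `u • 1` gives back the monodromy matrix.
-/

noncomputable section

open Matrix Finset

/-- The monodromy matrix `T_N(u) = L_N(u)·L_{N−1}(u)⋯L_1(u)` built from the local
Lax matrices. -/
def monodromy {R : Type*} [Ring R] {N : ℕ}
    (L : Fin N → ℂ → Matrix (Fin 2) (Fin 2) R) (u : ℂ) : Matrix (Fin 2) (Fin 2) R :=
  ((List.ofFn fun m : Fin N => L m u).reverse).prod

lemma Polynomial.eval₂_id_eq_sum_range_reflect {R : Type*} [Ring R] {x : R}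
    {f : Polynomial R} {N : ℕ} (hf : f.natDegree ≤ N) (hx : ∀ r : R, Commute r x) :
    f.eval₂ (RingHom.id R) x = ∑ k ∈ range (N + 1), x ^ (N - k) * f.coeff (N - k) := by
  rw [Polynomial.eval₂_eq_sum_range' _ (Nat.lt_succ_of_le hf), ← sum_range_reflect]
  exact sum_congr rfl fun k _ => ((hx _).pow_right _).eq

lemma Fin.sum_pairs_lt_eq_sum_range {M : Type*} [AddCommMonoid M] (n : ℕ) (f : ℕ → ℕ → M) :
    ∑ q ∈ univ.filter (fun q : Fin n × Fin n => q.1 < q.2), f q.1 q.2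
      = ∑ k ∈ range n, ∑ m ∈ range k, f m k := by
  rw [sum_filter, Fintype.sum_prod_type, sum_comm, ← Fin.sum_univ_eq_sum_range]
  refine sum_congr rfl fun k _ => ?_
  have hk : (range n).filter (· < (k : ℕ)) = range k := by
    ext m
    simp only [mem_filter, mem_range]
    omega
  simp_rw [Fin.lt_def]
  rw [Fin.sum_univ_eq_sum_range (fun m => if m < (k : ℕ) then f m k else 0), ← sum_filter, hk]

namespace Toda

open Polynomial

variable {R : Type*} [Ring R]

def laxMatrix (c : R) (b : Rˣ) : Matrix (Fin 2) (Fin 2) R[X] :=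
  !![X - C c, -C (b : R); C ((b⁻¹ : Rˣ) : R), 0]

def transfer (p : ℕ → R) (a : ℕ → Rˣ) : ℕ → Matrix (Fin 2) (Fin 2) R[X]
  | 0 => 1
  | n + 1 => laxMatrix (p n) (a n) * transfer p a n

variable {p : ℕ → R} {a : ℕ → Rˣ}

lemma transfer_succ_zero_apply (n : ℕ) (j : Fin 2) :
    transfer p a (n + 1) 0 j
      = (X - C (p n)) * transfer p a n 0 j - C (a n : R) * transfer p a n 1 j := by
  simp [transfer, laxMatrix, Matrix.mul_apply, sub_eq_add_neg]

lemma transfer_succ_one_apply (n : ℕ) (j : Fin 2) :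
    transfer p a (n + 1) 1 j = C (((a n)⁻¹ : Rˣ) : R) * transfer p a n 0 j := by
  simp [transfer, laxMatrix, Matrix.mul_apply]

lemma coeff_transfer_succ_zero_succ (n k : ℕ) (j : Fin 2) :
    (transfer p a (n + 1) 0 j).coeff (k + 1)
      = (transfer p a n 0 j).coeff k - p n * (transfer p a n 0 j).coeff (k + 1)
        - a n * (transfer p a n 1 j).coeff (k + 1) := by
  rw [transfer_succ_zero_apply, coeff_sub, coeff_X_sub_C_mul, coeff_C_mul]

lemma coeff_transfer_succ_one (n k : ℕ) (j : Fin 2) :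
    (transfer p a (n + 1) 1 j).coeff k = ((a n)⁻¹ : Rˣ) * (transfer p a n 0 j).coeff k := by
  rw [transfer_succ_one_apply, coeff_C_mul]

lemma coeff_transfer_col_zero_eq_zero {n k : ℕ} {i : Fin 2} (h : n < k + i) :
    (transfer p a n i 0).coeff k = 0 := by
  induction n generalizing k i with
  | zero =>
    match i with
    | 0 => simp [transfer, coeff_one, show k ≠ 0 by omega]
    | 1 => simp [transfer]
  | succ n ih =>
    match i, k with
    | 0, 0 => omega
    | 0, k + 1 =>
      rw [coeff_transfer_succ_zero_succ, ih (i := 0), ih (i := 0), ih (i := 1)]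
      · simp only [mul_zero, sub_self]
      all_goals omega
    | 1, k => rw [coeff_transfer_succ_one, ih (i := 0) (by omega), mul_zero]

-- Stated for `transfer p a (n + 1)`: the `(1,1)` entry of `transfer p a 0 = 1` breaks the bound.
lemma coeff_transfer_col_one_eq_zero {n k : ℕ} {i : Fin 2} (h : n < k + i) :
    (transfer p a (n + 1) i 1).coeff k = 0 := by
  induction n generalizing k i with
  | zero =>
    match i with
    | 0 => simp [transfer, laxMatrix, coeff_C, show k ≠ 0 by omega]
    | 1 => simp [transfer, laxMatrix]
  | succ n ih =>
    match i, k with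
    | 0, 0 => omega
    | 0, k + 1 =>
      rw [coeff_transfer_succ_zero_succ, ih (i := 0), ih (i := 0), ih (i := 1)]
      · simp only [mul_zero, sub_self]
      all_goals omega
    | 1, k => rw [coeff_transfer_succ_one, ih (i := 0) (by omega), mul_zero]

lemma coeff_transfer_zero_zero_self (n : ℕ) : (transfer p a n 0 0).coeff n = 1 := by
  induction n with
  | zero => simp [transfer]
  | succ n ih =>
    rw [coeff_transfer_succ_zero_succ, ih, coeff_transfer_col_zero_eq_zero (i := 0),
      coeff_transfer_col_zero_eq_zero (i := 1)] <;> simp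

lemma coeff_transfer_one_zero (n : ℕ) :
    (transfer p a (n + 1) 1 0).coeff n = ((a n)⁻¹ : Rˣ) := by
  rw [coeff_transfer_succ_one, coeff_transfer_zero_zero_self, mul_one]

lemma coeff_transfer_zero_one (n : ℕ) : (transfer p a (n + 1) 0 1).coeff n = -a 0 := by
  induction n with
  | zero => simp [transfer, laxMatrix]
  | succ n ih =>
    rw [coeff_transfer_succ_zero_succ, ih, coeff_transfer_col_one_eq_zero (i := 0),
      coeff_transfer_col_one_eq_zero (i := 1)] <;> simp

lemma coeff_transfer_one_one (n : ℕ) :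
    (transfer p a (n + 2) 1 1).coeff n = -(((a (n + 1))⁻¹ : Rˣ) * a 0 : R) := by
  rw [coeff_transfer_succ_one, coeff_transfer_zero_one, mul_neg]

lemma coeff_transfer_zero_zero_sub_one (n : ℕ) :
    (transfer p a (n + 1) 0 0).coeff n = -∑ m ∈ range (n + 1), p m := by
  induction n with
  | zero => simp [transfer, laxMatrix]
  | succ n ih =>
    rw [coeff_transfer_succ_zero_succ, ih, coeff_transfer_zero_zero_self,
      coeff_transfer_col_zero_eq_zero (i := 1) (by simp), sum_range_succ _ (n + 1)]
    simp only [mul_one, mul_zero, sub_zero]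
    abel

lemma coeff_transfer_zero_zero_sub_two (hp : ∀ m k, p m * p k = p k * p m) (n : ℕ) :
    (transfer p a (n + 2) 0 0).coeff n
      = ∑ k ∈ range (n + 2), ∑ m ∈ range k, p m * p k
        - ∑ k ∈ range (n + 1), (a (k + 1) : R) * ((a k)⁻¹ : Rˣ) := by
  induction n with
  | zero =>
    simp [transfer, laxMatrix, Matrix.mul_apply, sum_range_succ, hp 0 1, sub_eq_add_neg]
  | succ n ih =>
    rw [coeff_transfer_succ_zero_succ, ih, coeff_transfer_zero_zero_sub_one,
      coeff_transfer_one_zero]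
    rw [sum_range_succ (fun k => ∑ m ∈ range k, p m * p k) (n + 2),
      sum_range_succ (fun k => (a (k + 1) : R) * ((a k)⁻¹ : Rˣ)) (n + 1)]
    simp only [mul_neg, mul_sum, hp (n + 2)]
    abel

lemma natDegree_trace_transfer_le (n : ℕ) :
    (trace (transfer p a (n + 2))).natDegree ≤ n + 2 := by
  refine natDegree_le_iff_coeff_eq_zero.mpr fun k hk => ?_
  rw [trace_fin_two, coeff_add, coeff_transfer_col_zero_eq_zero (i := 0),
    coeff_transfer_col_one_eq_zero (i := 1)] <;> simp <;> omega

lemma coeff_trace_transfer_self (n : ℕ) : (trace (transfer p a (n + 2))).coeff (n + 2) = 1 := by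
  rw [trace_fin_two, coeff_add, coeff_transfer_zero_zero_self,
    coeff_transfer_col_one_eq_zero (i := 1) (by simp), add_zero]

lemma coeff_trace_transfer_sub_one (n : ℕ) :
    (trace (transfer p a (n + 2))).coeff (n + 1) = -∑ m ∈ range (n + 2), p m := by
  rw [trace_fin_two, coeff_add, coeff_transfer_zero_zero_sub_one,
    coeff_transfer_col_one_eq_zero (i := 1) (by simp), add_zero]

lemma coeff_trace_transfer_sub_two (hp : ∀ m k, p m * p k = p k * p m) (n : ℕ) :
    (trace (transfer p a (n + 2))).coeff n
      = ∑ k ∈ range (n + 2), ∑ m ∈ range k, p m * p k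
        - ∑ k ∈ range (n + 1), (a (k + 1) : R) * ((a k)⁻¹ : Rˣ)
        - ((a (n + 1))⁻¹ : Rˣ) * a 0 := by
  rw [trace_fin_two, coeff_add, coeff_transfer_zero_zero_sub_two hp, coeff_transfer_one_one,
    sub_eq_add_neg _ (_ * _)]

lemma mapMatrix_transfer {S : Type*} [Ring S] (f : R[X] →+* S) (n : ℕ) :
    f.mapMatrix (transfer p a n)
      = (List.ofFn fun m : Fin n => f.mapMatrix (laxMatrix (p m) (a m))).reverse.prod := by
  induction n with
  | zero => simp [transfer]
  | succ n ih =>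
    rw [transfer, map_mul, ih, List.ofFn_succ', List.concat_eq_append, List.reverse_append]
    simp

lemma mapMatrix_eval_laxMatrix {x : R} (hx : ∀ r : R, Commute r x) (c : R) (b : Rˣ) :
    (eval₂RingHom' (RingHom.id R) x hx).mapMatrix (laxMatrix c b)
      = !![x - c, -(b : R); ((b⁻¹ : Rˣ) : R), 0] := by
  ext i j
  fin_cases i <;> fin_cases j <;> simp [laxMatrix]

lemma monodromy_eq_mapMatrix_transfer [Algebra ℂ R] {N : ℕ}
    {L : Fin N → ℂ → Matrix (Fin 2) (Fin 2) R}
    (hL : ∀ (m : Fin N) (u : ℂ),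
      L m u = !![algebraMap ℂ R u - p m, -(a m : R); (((a m)⁻¹ : Rˣ) : R), 0]) (u : ℂ) :
    monodromy L u = (eval₂RingHom' (RingHom.id R) (algebraMap ℂ R u)
      (Algebra.commute_algebraMap_right u)).mapMatrix (transfer p a N) := by
  simp only [monodromy, mapMatrix_transfer, mapMatrix_eval_laxMatrix, hL]

end Toda

open Polynomial Toda

/-- The trace `t(u)` of the Toda monodromy matrix is a monic polynomial in `u` of degree
`N`, `t(u) = u^N + t₁·u^{N−1} + t₂·u^{N−2} + (lower order)`, with
`t₁ = −(p₁ + ⋯ + p_N)` and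
`t₂ = ∑_{m<k} p_m p_k − ∑_{k=1}^{N−1} a_{k+1}·a_k⁻¹ − a₁·a_N⁻¹`. -/
theorem toda_transfer_matrix_polynomial
    (N : ℕ) (hN : 2 ≤ N)
    (R : Type*) [Ring R] [Algebra ℂ R] (p : Fin N → R) (a : Fin N → Rˣ)
    (hpp : ∀ m k, p m * p k = p k * p m)
    (haainv : ∀ m k, (a m : R) * (((a k)⁻¹ : Rˣ) : R) = (((a k)⁻¹ : Rˣ) : R) * (a m : R))
    (L : Fin N → ℂ → Matrix (Fin 2) (Fin 2) R)
    (hL : ∀ m (u : ℂ),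
      L m u = !![algebraMap ℂ R u - p m, -(a m : R); (((a m)⁻¹ : Rˣ) : R), 0]) :
    ∃ t : ℕ → R,
      t 0 = 1 ∧
      t 1 = -(∑ m : Fin N, p m) ∧
      t 2 = (∑ q ∈ Finset.univ.filter (fun q : Fin N × Fin N => q.1 < q.2), p q.1 * p q.2)
          - (∑ k : Fin (N - 1),
              ((a (Fin.cast (by omega) k.succ) : R) *
                (((a (Fin.castLE (by omega) k.castSucc))⁻¹ : Rˣ) : R)))
          - (a ⟨0, by omega⟩ : R) * (((a ⟨N - 1, by omega⟩)⁻¹ : Rˣ) : R) ∧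
      ∀ u : ℂ, Matrix.trace (monodromy L u)
          = ∑ k ∈ Finset.range (N + 1), algebraMap ℂ R (u ^ (N - k)) * t k := by
  obtain ⟨n, rfl⟩ : ∃ n, N = n + 2 := ⟨N - 2, by omega⟩
  set p' : ℕ → R := fun k => p (Fin.ofNat (n + 2) k)
  set a' : ℕ → Rˣ := fun k => a (Fin.ofNat (n + 2) k)
  have ha' (k : ℕ) (hk : k < n + 2) : a' k = a ⟨k, hk⟩ :=
    congrArg a (Fin.ext (Nat.mod_eq_of_lt hk))
  refine ⟨fun k => (trace (transfer p' a' (n + 2))).coeff (n + 2 - k),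
    coeff_trace_transfer_self n, ?_, ?_, fun u => ?_⟩
  · show (trace (transfer p' a' (n + 2))).coeff (n + 1) = _
    rw [coeff_trace_transfer_sub_one, ← Fin.sum_univ_eq_sum_range]
    simp [p']
  · show (trace (transfer p' a' (n + 2))).coeff n = _
    rw [coeff_trace_transfer_sub_two (p := p') fun _ _ => hpp _ _,
      ← Fin.sum_pairs_lt_eq_sum_range, haainv]
    congr 2
    · simp [p']
    · rw [← Fin.sum_univ_eq_sum_range]
      exact sum_congr rfl fun k _ => by rw [ha' _ (by omega), ha' _ (by omega)]; rfl
    · rw [ha' _ (by omega)]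
      rfl
  · rw [monodromy_eq_mapMatrix_transfer (p := p') (a := a') fun m u => by
        simp only [hL, p', a', Fin.ofNat_eq_cast, Fin.cast_val_eq_self],
      RingHom.mapMatrix_apply, ← AddMonoidHom.map_trace, eval₂RingHom'_apply,
      eval₂_id_eq_sum_range_reflect (natDegree_trace_transfer_le n)
        (Algebra.commute_algebraMap_right u)]
    simp only [map_pow]
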